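/- arXiv:1907.06224 — 2 statements merged into one kernel-verified Lean document; each statement's English description precedes it below -/
import Mathlib

section
/- Let A and B be C*-algebras and let u : A → B be a completely positive map with ‖u‖ ≤ 1. If a ∈ A satisfies u(a*a) = u(a)*u(a), then u(xa) = u(x)u(a) for every x ∈ A. -/
/-!
By the Kadison–Schwarz inequality the `B`-valued sesquilinear form
`φ(x, y) = u(x⋆ y) - u(x)⋆ u(y)` is positive semidefinite, and `φ(a, a) = 0` by hypothesis.
Expanding `0 ≤ φ(a + t x, a + t x) = t (φ(a, x) + φ(x, a)) + t² φ(x, x)` for real `t` and letting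
`t → 0±` (the positive cone is closed) gives `φ(a, x) + φ(x, a) = 0`; replacing `x` by `i x`
then gives `φ(x, a) = 0`. As `u` is `⋆`-preserving, applying this to `x⋆` yields the claim.
-/

noncomputable section

def IsStarSquare {R n : Type*} [Fintype n] [NonUnitalSemiring R] [StarRing R]
    (M : Matrix n n R) : Prop :=
  ∃ N : Matrix n n R, M = N.conjTranspose * N

/-- A (not necessarily linear) map between `*`-rings is *completely positive* if all of its
matrix amplifications send positive matrices (i.e. star-squares) to positive matrices. -/
def IsCPMap {A B : Type*} [NonUnitalSemiring A] [StarRing A] [NonUnitalSemiring B] [StarRing B]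
    (u : A → B) : Prop :=
  ∀ (k : ℕ) (M : Matrix (Fin k) (Fin k) A), IsStarSquare M → IsStarSquare (M.map u)

section Dec

variable {A B : Type*} [NonUnitalNormedRing A] [StarRing A] [NormedSpace ℂ A]
  [NonUnitalNormedRing B] [StarRing B] [NormedSpace ℂ B]

/-- The set of `max ‖S₁‖ ‖S₂‖` over all completely positive `S₁, S₂` making the
2×2 sandwich map completely positive. -/
def decSet (u : A →L[ℂ] B) : Set ℝ :=
  { r | ∃ S₁ S₂ : A →L[ℂ] B, IsCPMap ⇑S₁ ∧ IsCPMap ⇑S₂ ∧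
      IsCPMap (fun x => (!![S₁ x, u x; star (u (star x)), S₂ x] : Matrix (Fin 2) (Fin 2) B)) ∧
      r = max ‖S₁‖ ‖S₂‖ }

/-- A map is decomposable when it is a linear combination of completely positive maps. -/
def IsDecomposable (u : A →L[ℂ] B) : Prop :=
  ∃ u₁ u₂ u₃ u₄ : A →L[ℂ] B, IsCPMap ⇑u₁ ∧ IsCPMap ⇑u₂ ∧ IsCPMap ⇑u₃ ∧ IsCPMap ⇑u₄ ∧
    u = u₁ - u₂ + Complex.I • (u₃ - u₄)

/-- Haagerup's decomposable norm. -/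
def decNorm (u : A →L[ℂ] B) : ℝ := sInf (decSet u)

end Dec

open Filter Topology

section OrderedModule

variable {M : Type*} [AddCommGroup M] [PartialOrder M] [Module ℝ M] [PosSMulMono ℝ M]
  [TopologicalSpace M] [ClosedIciTopology M] [ContinuousAdd M] [ContinuousSMul ℝ M]

lemma nonneg_of_forall_nonneg_smul_add_sq_smul {d e : M} (h : ∀ t : ℝ, 0 ≤ t • d + t ^ 2 • e) :
    0 ≤ d := by
  have hlim : Tendsto (fun t : ℝ => d + t • e) (𝓝[>] 0) (𝓝 d) := by
    have : Continuous fun t : ℝ => d + t • e := by fun_prop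
    simpa using (this.tendsto 0).mono_left nhdsWithin_le_nhds
  refine ge_of_tendsto hlim ?_
  filter_upwards [self_mem_nhdsWithin] with t (ht : 0 < t)
  have hscale : d + t • e = t⁻¹ • (t • d + t ^ 2 • e) := by
    rw [smul_add, smul_smul, smul_smul, inv_mul_cancel₀ ht.ne', one_smul, sq,
      ← mul_assoc, inv_mul_cancel₀ ht.ne', one_mul]
  rw [hscale]
  exact smul_nonneg (inv_nonneg.2 ht.le) (h t)

lemma eq_zero_of_forall_nonneg_smul_add_sq_smul [IsOrderedAddMonoid M] {d e : M}
    (h : ∀ t : ℝ, 0 ≤ t • d + t ^ 2 • e) : d = 0 := by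
  refine le_antisymm ?_ (nonneg_of_forall_nonneg_smul_add_sq_smul h)
  refine neg_nonneg.1 (nonneg_of_forall_nonneg_smul_add_sq_smul (e := e) fun t => ?_)
  simpa using h (-t)

end OrderedModule

lemma LinearMap.apply_eq_zero_of_nonneg_of_apply_self_eq_zero {E M : Type*} [AddCommGroup E]
    [Module ℂ E] [AddCommGroup M] [Module ℂ M] [PartialOrder M] [IsOrderedAddMonoid M]
    [PosSMulMono ℝ M] [TopologicalSpace M] [ClosedIciTopology M] [ContinuousAdd M]
    [ContinuousSMul ℝ M] (φ : E →ₗ⋆[ℂ] E →ₗ[ℂ] M) (hφ : ∀ y, 0 ≤ φ y y) {a : E}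
    (ha : φ a a = 0) (x : E) : φ x a = 0 := by
  have hsum (z : E) : φ a z + φ z a = 0 :=
    eq_zero_of_forall_nonneg_smul_add_sq_smul (e := φ z z) fun t => by
      have := hφ (a + (t : ℂ) • z)
      simp only [map_add, LinearMap.map_smulₛₗ₂, map_smul, LinearMap.add_apply, ha,
        Complex.conj_ofReal] at this
      convert this using 1
      simp only [← Complex.coe_smul, smul_add, smul_smul]
      push_cast
      module
  have hI := hsum (Complex.I • x)
  simp only [LinearMap.map_smulₛₗ₂, map_smul, Complex.conj_I] at hI
  have : (2 * Complex.I) • φ x a = 0 := by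
    linear_combination (norm := module) Complex.I • hsum x - hI
  exact (smul_eq_zero.1 this).resolve_left (by simp)

section StarRing

variable {A B : Type*} [NonUnitalRing A] [StarRing A] [NonUnitalRing B] [StarRing B]
  [PartialOrder B] [StarOrderedRing B] {u : A → B}

lemma IsCPMap.map_star_mul_self_nonneg (hcp : IsCPMap u) (s : A) : 0 ≤ u (star s * s) := by
  obtain ⟨N, hN⟩ := hcp 1 (Matrix.of fun _ _ => star s * s) ⟨Matrix.of fun _ _ => s, by
    ext i j; simp [Matrix.mul_apply]⟩
  have h00 := congrFun₂ hN 0 0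
  simp only [Matrix.map_apply, Matrix.of_apply, Matrix.mul_apply, Matrix.conjTranspose_apply,
    Fin.sum_univ_one] at h00
  rw [h00]
  exact star_mul_self_nonneg _

/-- Complete positivity at level 2 for the star-square of `!![r, s; 0, 0]`, tested against the
vector `(-w, 1)`; the resulting expression makes sense without a unit in `B`. -/
lemma IsCPMap.star_mul_map_mul_sub_nonneg (hcp : IsCPMap u) (r s : A) (w : B) :
    0 ≤ star w * u (star r * r) * w - star w * u (star r * s) - u (star s * r) * w
      + u (star s * s) := by
  let R : Matrix (Fin 2) (Fin 2) A := !![r, s; 0, 0]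
  obtain ⟨N, hN⟩ := hcp 2 (R.conjTranspose * R) ⟨R, rfl⟩
  have hentry (i j : Fin 2) : u ((R.conjTranspose * R) i j) = ∑ k, star (N k i) * N k j := by
    simpa [Matrix.mul_apply] using congrFun₂ hN i j
  have h00 := hentry 0 0
  have h01 := hentry 0 1
  have h10 := hentry 1 0
  have h11 := hentry 1 1
  simp only [R, Matrix.mul_apply, Matrix.conjTranspose_apply, Matrix.of_apply, Matrix.cons_val',
    Matrix.cons_val_zero, Matrix.cons_val_one, Matrix.cons_val_fin_one, Fin.sum_univ_two,
    star_zero, mul_zero, add_zero] at h00 h01 h10 h11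
  rw [h00, h01, h10, h11]
  convert Finset.sum_nonneg fun k (_ : k ∈ Finset.univ) =>
    star_mul_self_nonneg (N k 1 - N k 0 * w) using 1
  simp only [Fin.sum_univ_two, star_sub, star_mul]
  noncomm_ring

end StarRing

section CStarAlgebra

variable {A B F : Type*} [NonUnitalCStarAlgebra A] [NonUnitalCStarAlgebra B] [FunLike F A B]

def mulDefectForm [LinearMapClass F ℂ A B] (u : F) : A →ₗ⋆[ℂ] A →ₗ[ℂ] B :=
  LinearMap.mk₂'ₛₗ (starRingEnd ℂ) (RingHom.id ℂ) (fun x y => u (star x * y) - star (u x) * u y)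
    (fun x x' y => by simp only [star_add, add_mul, map_add]; abel)
    (fun c x y => by simp only [star_smul, smul_mul_assoc, map_smul, smul_sub]; rfl)
    (fun x y y' => by simp only [mul_add, map_add]; abel)
    (fun c x y => by simp only [mul_smul_comm, map_smul, smul_sub]; rfl)

@[simp]
lemma mulDefectForm_apply [LinearMapClass F ℂ A B] (u : F) (x y : A) :
    mulDefectForm u x y = u (star x * y) - star (u x) * u y :=
  rfl

variable [PartialOrder A] [StarOrderedRing A] [PartialOrder B] [StarOrderedRing B] {u : F}

lemma IsCPMap.map_nonneg (hcp : IsCPMap u) {x : A} (hx : 0 ≤ x) : 0 ≤ u x := by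
  obtain ⟨s, rfl⟩ := CStarAlgebra.nonneg_iff_eq_star_mul_self.1 hx
  exact hcp.map_star_mul_self_nonneg s

variable [LinearMapClass F ℂ A B]

lemma IsCPMap.map_isSelfAdjoint (hcp : IsCPMap u) {x : A} (hx : IsSelfAdjoint x) :
    IsSelfAdjoint (u x) := by
  obtain ⟨p, n, hp, hn, rfl⟩ := hx.exists_nonneg_sub_nonneg
  rw [map_sub]
  exact (hcp.map_nonneg hp).isSelfAdjoint.sub (hcp.map_nonneg hn).isSelfAdjoint

lemma IsCPMap.map_star (hcp : IsCPMap u) (x : A) : u (star x) = star (u x) := by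
  have hre := hcp.map_isSelfAdjoint (realPart x).2
  have him := hcp.map_isSelfAdjoint (imaginaryPart x).2
  rw [← realPart_add_I_smul_imaginaryPart x]
  simp only [star_add, selfAdjoint.star_val_eq, star_smul, RCLike.star_def, Complex.conj_I,
    neg_smul, map_add, map_neg, map_smul, hre.star_eq, him.star_eq]

/-- Kadison–Schwarz. As `A` need not be unital, `u (e⋆ e) ≤ 1` for `e` running through an
increasing approximate unit takes the place of `u 1 ≤ 1`. -/
lemma IsCPMap.star_map_mul_map_le {u : A →L[ℂ] B} (hcp : IsCPMap ⇑u) (hu : ‖u‖ ≤ 1) (y : A) :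
    star (u y) * u y ≤ u (star y * y) := by
  have hl := CStarAlgebra.increasingApproximateUnit A
  have hlim : Tendsto (fun e => star (u y) * u y - star (u y) * u (e * y) - u (star y * e) * u y
      + u (star y * y)) (CStarAlgebra.approximateUnit A)
      (𝓝 (u (star y * y) - star (u y) * u y)) := by
    have h₁ : Tendsto (fun e => u (e * y)) (CStarAlgebra.approximateUnit A) (𝓝 (u y)) :=
      (u.continuous.tendsto _).comp (hl.tendsto_mul_right y)
    have h₂ : Tendsto (fun e => u (star y * e)) (CStarAlgebra.approximateUnit A)
        (𝓝 (star (u y))) :=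
      hcp.map_star y ▸ (u.continuous.tendsto _).comp (hl.tendsto_mul_left (star y))
    convert ((tendsto_const_nhds.sub (h₁.const_mul _)).sub (h₂.mul_const _)).add
      tendsto_const_nhds using 2
    abel
  refine sub_nonneg.1 (ge_of_tendsto hlim ?_)
  filter_upwards [hl.eventually_nonneg, hl.eventually_norm] with e he₀ he₁
  have hX : ‖u (star e * e)‖ ≤ 1 := calc
    ‖u (star e * e)‖ ≤ ‖u‖ * (‖e‖ * ‖e‖) := by
      grw [u.le_opNorm, norm_mul_le, norm_star]
    _ ≤ 1 := by nlinarith [norm_nonneg u, norm_nonneg e]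
  have hconj : star (u y) * u (star e * e) * u y ≤ star (u y) * u y :=
    (CStarAlgebra.star_left_conjugate_le_norm_smul
      (hcp.map_star_mul_self_nonneg e).isSelfAdjoint).trans
      (smul_le_of_le_one_left (star_mul_self_nonneg _) hX)
  have hsandwich := hcp.star_mul_map_mul_sub_nonneg e y (u y)
  rw [he₀.isSelfAdjoint.star_eq] at hsandwich hconj
  convert add_nonneg hsandwich (sub_nonneg.2 hconj) using 1
  abel

end CStarAlgebra

/-- **Choi's multiplicative domain lemma.** If a contractive completely positive map
`u` between C*-algebras satisfies `u (a* a) = (u a)* (u a)`, then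
`u (x a) = u x * u a` for every `x`. -/
theorem cp_contraction_mul_right
    {A B : Type*} [NonUnitalCStarAlgebra A] [NonUnitalCStarAlgebra B]
    (u : A →L[ℂ] B) (hcp : IsCPMap ⇑u) (hu : ‖u‖ ≤ 1) (a : A)
    (ha : u (star a * a) = star (u a) * u a) :
    ∀ x : A, u (x * a) = u x * u a := by
  let _ := CStarAlgebra.spectralOrder A
  let _ := CStarAlgebra.spectralOrder B
  have := CStarAlgebra.spectralOrderedRing A
  have := CStarAlgebra.spectralOrderedRing B
  intro x
  have hnull : mulDefectForm u (star x) a = 0 :=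
    (mulDefectForm u).apply_eq_zero_of_nonneg_of_apply_self_eq_zero
      (fun y => sub_nonneg.2 (hcp.star_map_mul_map_le hu y)) (sub_eq_zero.2 ha) (star x)
  rwa [mulDefectForm_apply, sub_eq_zero, star_star, hcp.map_star, star_star] at hnull
end
end

section
/- Let A be a C*-algebra and a, b ∈ A. The map u : A → A defined by u(x) = a*xb is decomposable, with decomposable norm ‖u‖_dec ≤ ‖a‖·‖b‖. -/
noncomputable section

section Aux

variable {A : Type*} [NonUnitalCStarAlgebra A]

def sandwL (c d : A) : A →ₗ[ℂ] A where
  toFun x := star c * x * d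
  map_add' x y := by noncomm_ring
  map_smul' r x := by simp [mul_smul_comm, smul_mul_assoc]

def sandw (c d : A) : A →L[ℂ] A :=
  LinearMap.mkContinuous (sandwL c d) (‖c‖ * ‖d‖) (fun x => by
    simp only [sandwL, LinearMap.coe_mk, AddHom.coe_mk]
    calc ‖star c * x * d‖ ≤ ‖star c * x‖ * ‖d‖ := norm_mul_le _ _
      _ ≤ ‖c‖ * ‖x‖ * ‖d‖ := by
          gcongr; simpa using norm_mul_le (star c) x
      _ = ‖c‖ * ‖d‖ * ‖x‖ := by ring)

lemma sandw_apply (c d x : A) : sandw c d x = star c * x * d := rfl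

lemma norm_sandw_le (c d : A) : ‖sandw c d‖ ≤ ‖c‖ * ‖d‖ :=
  LinearMap.mkContinuous_norm_le _ (by positivity) _

lemma isCP_sandw (c : A) : IsCPMap (⇑(sandw c c)) := by
  rintro k M ⟨N, rfl⟩
  refine ⟨N.map (· * c), ?_⟩
  ext i j
  simp only [Matrix.map_apply, Matrix.mul_apply, Matrix.conjTranspose_apply, sandw_apply,
    star_mul, Finset.mul_sum, Finset.sum_mul]
  congr 1; ext k
  noncomm_ring

lemma isCP_pair (c₁ c₂ : A) :
    IsCPMap (fun x => (!![star c₁ * x * c₁, star c₁ * x * c₂;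
        star c₂ * x * c₁, star c₂ * x * c₂] : Matrix (Fin 2) (Fin 2) A)) := by
  rintro k M ⟨N, rfl⟩
  refine ⟨N.map (fun x => !![x * c₁, x * c₂; 0, 0]), ?_⟩
  ext i j p q
  simp only [Matrix.map_apply, Matrix.mul_apply, Matrix.conjTranspose_apply,
    Matrix.sum_apply]
  fin_cases p <;> fin_cases q <;>
    simp [Matrix.mul_apply, Fin.sum_univ_two, star_mul, Finset.mul_sum, Finset.sum_mul,
      mul_assoc]

lemma mem_decSet_of_rep (u : A →L[ℂ] A) (c₁ c₂ : A) (h : ∀ x, u x = star c₁ * x * c₂) :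
    max ‖sandw c₁ c₁‖ ‖sandw c₂ c₂‖ ∈ decSet u := by
  refine ⟨sandw c₁ c₁, sandw c₂ c₂, isCP_sandw _, isCP_sandw _, ?_, rfl⟩
  have key : (fun x => (!![sandw c₁ c₁ x, u x; star (u (star x)), sandw c₂ c₂ x] :
      Matrix (Fin 2) (Fin 2) A)) = fun x => !![star c₁ * x * c₁, star c₁ * x * c₂;
        star c₂ * x * c₁, star c₂ * x * c₂] := by
    funext x
    have h2 : star (u (star x)) = star c₂ * x * c₁ := by
      rw [h]; simp [star_mul, mul_assoc]
    rw [h, h2, sandw_apply, sandw_apply]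
  rw [key]
  exact isCP_pair c₁ c₂

end Aux

/-- For `a, b` in a C*-algebra `A`, the map `x ↦ a* x b` is decomposable with
decomposable norm at most `‖a‖ ‖b‖`. -/
theorem decNorm_conj_le
    {A : Type*} [NonUnitalCStarAlgebra A] (a b : A)
    (u : A →L[ℂ] A) (hu : ∀ x, u x = star a * x * b) :
    IsDecomposable u ∧ decNorm u ≤ ‖a‖ * ‖b‖ := by
  constructor
  · set d₁ : A := (2⁻¹ : ℂ) • (a + b)
    set d₂ : A := (2⁻¹ : ℂ) • (a - b)
    set d₃ : A := (2⁻¹ : ℂ) • (a - Complex.I • b)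
    set d₄ : A := (2⁻¹ : ℂ) • (a + Complex.I • b)
    refine ⟨sandw d₁ d₁, sandw d₂ d₂, sandw d₃ d₃, sandw d₄ d₄,
      isCP_sandw _, isCP_sandw _, isCP_sandw _, isCP_sandw _, ?_⟩
    ext x
    simp only [ContinuousLinearMap.add_apply, ContinuousLinearMap.sub_apply,
      ContinuousLinearMap.coe_smul', Pi.smul_apply, sandw_apply, hu, d₁, d₂, d₃, d₄]
    have h2 : star (2⁻¹ : ℂ) = (2⁻¹ : ℂ) := by norm_num [Complex.star_def]
    simp only [star_smul, star_add, star_sub, h2, Complex.star_def, Complex.conj_I,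
      smul_mul_assoc, mul_smul_comm, smul_smul, mul_add, add_mul, sub_mul, mul_sub,
      smul_sub, smul_add, neg_smul, neg_mul, mul_neg, neg_neg]
    match_scalars <;>
    · simp only [map_mul, map_inv₀, Complex.conj_I, Complex.conj_ofNat, mul_one]
      ring_nf
      try simp [Complex.I_sq]
      try norm_num
  · have hbdd : BddBelow (decSet u) := ⟨0, by rintro r ⟨S₁, S₂, -, -, -, rfl⟩; positivity⟩
    by_cases hab : a = 0 ∨ b = 0
    · have hu0 : ∀ x, u x = star (0:A) * x * (0:A) := by
        intro x; rcases hab with h | h <;> simp [hu, h]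
      refine le_trans (csInf_le hbdd (mem_decSet_of_rep u 0 0 hu0)) ?_
      have h1 := norm_sandw_le (0:A) (0:A)
      simp only [norm_zero, mul_zero] at h1
      refine le_trans (max_le h1 h1) (by positivity)
    · push_neg at hab
      obtain ⟨ha, hb⟩ := hab
      have hna : (0:ℝ) < ‖a‖ := norm_pos_iff.mpr ha
      have hnb : (0:ℝ) < ‖b‖ := norm_pos_iff.mpr hb
      set t : ℝ := Real.sqrt (‖b‖ / ‖a‖) with ht
      have htpos : 0 < t := Real.sqrt_pos.mpr (by positivity)
      have ht2 : t * t = ‖b‖ / ‖a‖ := Real.mul_self_sqrt (by positivity)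
      set c₁ : A := (t : ℂ) • a with hc₁
      set c₂ : A := ((t⁻¹ : ℝ) : ℂ) • b with hc₂
      have hrep : ∀ x, u x = star c₁ * x * c₂ := by
        intro x
        rw [hu, hc₁, hc₂]
        simp only [star_smul, Complex.star_def, Complex.conj_ofReal, smul_mul_assoc,
          mul_smul_comm, smul_smul]
        rw [← Complex.ofReal_mul, inv_mul_cancel₀ (ne_of_gt htpos)]
        simp
      have hn1 : ‖c₁‖ * ‖c₁‖ = ‖a‖ * ‖b‖ := by
        rw [hc₁, norm_smul, Complex.norm_real, Real.norm_eq_abs, abs_of_pos htpos,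
          mul_mul_mul_comm, ht2]
        field_simp
      have hn2 : ‖c₂‖ * ‖c₂‖ = ‖a‖ * ‖b‖ := by
        rw [hc₂, norm_smul, Complex.norm_real, Real.norm_eq_abs, abs_of_pos (by positivity),
          mul_mul_mul_comm, ← mul_inv, ht2]
        field_simp
      refine le_trans (csInf_le hbdd (mem_decSet_of_rep u c₁ c₂ hrep)) ?_
      exact max_le ((norm_sandw_le _ _).trans hn1.le) ((norm_sandw_le _ _).trans hn2.le)
end
end
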